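/- arXiv:1706.02916 — 4 statements merged into one kernel-verified Lean document; each statement's English description precedes it below -/
import Mathlib

section
/- Let φ : {1,…,k} → {1,…,l} be an injection and let a, b ∈ 𝓛(l) be ordered partitions with a ≼ b. Then φ*(a) ≼ φ*(b) in 𝓛(k); that is, the pullback map φ* : 𝓛(l) → 𝓛(k) is order preserving (so the ordered-partition posets 𝓛(l) form a preoperad of posets). -/
/-- An ordered partition of `{1,…,l}`: a pair `(ã, π)` where `ã` is a permutation of
`{1,…,l}` and `π : {1,…,l} → {1,…,t}` is a monotone surjection (for some `t`). -/
structure OrdPart (l : ℕ) where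
  blocks : ℕ
  perm : Equiv.Perm (Fin l)
  part : Fin l → Fin blocks
  mono : Monotone part
  surj : Function.Surjective part

/-- The partial order on `𝓛(l)`: `a ≼ b` iff (1) there is a monotone surjection `ρ`
with `ρ ∘ π_a ∘ ã⁻¹ = π_b ∘ b̃⁻¹`, and (2) whenever `π_a(i) = π_a(i+1)` then
`b̃⁻¹(ã(i)) < b̃⁻¹(ã(i+1))`. -/
def OrdPart.le {l : ℕ} (a b : OrdPart l) : Prop :=
  (∃ ρ : Fin a.blocks → Fin b.blocks, Monotone ρ ∧ Function.Surjective ρ ∧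
    ∀ x : Fin l, ρ (a.part (a.perm⁻¹ x)) = b.part (b.perm⁻¹ x)) ∧
  ∀ i j : Fin l, (j : ℕ) = (i : ℕ) + 1 → a.part i = a.part j →
    b.perm⁻¹ (a.perm i) < b.perm⁻¹ (a.perm j)

/-- `a'` is the pullback `φ*(a)` of the ordered partition `a` along an injection `φ`:
factoring the injection `ã⁻¹ ∘ φ` (uniquely) as `ι ∘ τ` with `τ` a permutation and
`ι` strictly increasing, and then the monotone map `π_a ∘ ι` (uniquely) as `μ ∘ π'`
with `π'` a monotone surjection and `μ` strictly increasing, we have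
`φ*(a) = (τ⁻¹, π')`; i.e. `a'.perm = τ⁻¹` and `a'.part = π'`. -/
def IsPullbackOrdPart {k l : ℕ} (φ : Fin k → Fin l) (a : OrdPart l) (a' : OrdPart k) :
    Prop :=
  ∃ ι : Fin k → Fin l, StrictMono ι ∧
    (∀ x : Fin k, a.perm⁻¹ (φ x) = ι (a'.perm⁻¹ x)) ∧
    ∃ μ : Fin a'.blocks → Fin a.blocks, StrictMono μ ∧
      ∀ x : Fin k, a.part (ι x) = μ (a'.part x)

/-!
The block map for `φ*(a) ≼ φ*(b)` is obtained by factoring `ρ ∘ μ_a` through the strictly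
increasing block inclusion `μ_b` of `φ*(b)`, which is possible since `ρ` maps the blocks of
`a` meeting the image of `φ` to blocks of `b` meeting it.
For the second condition, `φ*` preserves both the relative order of positions and
membership in a common block, so it reduces to condition (2) for `a ≼ b`, once that is
extended from consecutive positions to arbitrary positions in a block of `a`.
-/

open Set Order

-- Fibres of a monotone map are intervals, so covering steps inside a fibre chain up.
theorem Monotone.strictMonoOn_preimage_singleton_of_covBy {α β γ : Type*} [LinearOrder α]
    [SuccOrder α] [IsSuccArchimedean α] [PartialOrder β] [Preorder γ] {p : α → β}
    (hp : Monotone p) {f : α → γ} (hf : ∀ a b, a ⋖ b → p a = p b → f a < f b) (c : β) :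
    StrictMonoOn f (p ⁻¹' {c}) :=
  strictMonoOn_of_lt_succ (ordConnected_singleton.preimage_mono hp) fun a ha hac hsc =>
    hf a _ (covBy_succ_of_not_isMax ha) (hac.trans hsc.symm)

theorem Function.Surjective.exists_monotone_surjective_comp_eq {X A B A₀ B₀ : Type*}
    [Preorder A] [LinearOrder B] [Preorder A₀] [Preorder B₀] {u : X → A} {v : X → B}
    (hu : Surjective u) (hv : Surjective v) {μa : A → A₀} {μb : B → B₀} {ρ : A₀ → B₀}
    (hμa : Monotone μa) (hμb : StrictMono μb) (hρ : Monotone ρ)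
    (h : ∀ x, ρ (μa (u x)) = μb (v x)) :
    ∃ σ : A → B, Monotone σ ∧ Surjective σ ∧ ∀ x, σ (u x) = v x := by
  have hrange : range (ρ ∘ μa) ⊆ range μb := by
    rintro _ ⟨y, rfl⟩
    obtain ⟨x, rfl⟩ := hu y
    exact ⟨v x, (h x).symm⟩
  obtain ⟨σ, hσ⟩ := range_subset_range_iff_exists_comp.1 hrange
  have hμbσ (y : A) : μb (σ y) = ρ (μa y) := (congrFun hσ y).symm
  have hσu (x : X) : σ (u x) = v x := hμb.injective <| by rw [hμbσ, h]
  refine ⟨σ, fun y₁ y₂ hy => ?_, fun z => ?_, hσu⟩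
  · rw [← hμb.le_iff_le, hμbσ, hμbσ]
    exact hρ (hμa hy)
  · obtain ⟨x, rfl⟩ := hv z
    exact ⟨u x, hσu x⟩

namespace OrdPart

variable {l : ℕ}

theorem surjective_part_perm_inv (a : OrdPart l) :
    Function.Surjective fun x => a.part (a.perm⁻¹ x) :=
  a.surj.comp (Equiv.surjective _)

theorem le.perm_inv_lt {a b : OrdPart l} (hab : a.le b) {x y : Fin l}
    (hxy : a.perm⁻¹ x < a.perm⁻¹ y) (hp : a.part (a.perm⁻¹ x) = a.part (a.perm⁻¹ y)) :
    b.perm⁻¹ x < b.perm⁻¹ y := by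
  have hmono := a.mono.strictMonoOn_preimage_singleton_of_covBy
    (f := fun i => b.perm⁻¹ (a.perm i))
    (fun i j hij => hab.2 i j (Nat.covBy_iff_add_one_eq.1 (Fin.covBy_iff.1 hij)).symm)
    (a.part (a.perm⁻¹ y))
  simpa using hmono hp rfl hxy

end OrdPart

namespace IsPullbackOrdPart

variable {k l : ℕ} {φ : Fin k → Fin l} {a : OrdPart l} {a' : OrdPart k}

theorem perm_inv_lt_iff (h : IsPullbackOrdPart φ a a') {y z : Fin k} :
    a.perm⁻¹ (φ y) < a.perm⁻¹ (φ z) ↔ a'.perm⁻¹ y < a'.perm⁻¹ z := by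
  obtain ⟨ι, hι, hιφ, -⟩ := h
  rw [hιφ, hιφ, hι.lt_iff_lt]

theorem exists_strictMono_part_perm_inv (h : IsPullbackOrdPart φ a a') :
    ∃ μ : Fin a'.blocks → Fin a.blocks, StrictMono μ ∧
      ∀ x, a.part (a.perm⁻¹ (φ x)) = μ (a'.part (a'.perm⁻¹ x)) := by
  obtain ⟨ι, -, hιφ, μ, hμ, hμι⟩ := h
  exact ⟨μ, hμ, fun x => by rw [hιφ, hμι]⟩

theorem part_perm_inv_eq_iff (h : IsPullbackOrdPart φ a a') {y z : Fin k} :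
    a.part (a.perm⁻¹ (φ y)) = a.part (a.perm⁻¹ (φ z)) ↔
      a'.part (a'.perm⁻¹ y) = a'.part (a'.perm⁻¹ z) := by
  obtain ⟨μ, hμ, hμφ⟩ := h.exists_strictMono_part_perm_inv
  rw [hμφ, hμφ, hμ.injective.eq_iff]

end IsPullbackOrdPart

theorem stmt2_general {k l : ℕ} (φ : Fin k → Fin l)
    (a b : OrdPart l) (hab : a.le b)
    (a' : OrdPart k) (ha' : IsPullbackOrdPart φ a a')
    (b' : OrdPart k) (hb' : IsPullbackOrdPart φ b b') :
    a'.le b' := by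
  obtain ⟨ρ, hρ, -, hρab⟩ := hab.1
  obtain ⟨μa, hμa, hμa'⟩ := ha'.exists_strictMono_part_perm_inv
  obtain ⟨μb, hμb, hμb'⟩ := hb'.exists_strictMono_part_perm_inv
  refine ⟨a'.surjective_part_perm_inv.exists_monotone_surjective_comp_eq
    b'.surjective_part_perm_inv hμa.monotone hμb hρ fun x => ?_, fun i j hij hp => ?_⟩
  · rw [← hμa', ← hμb', hρab]
  · have hlt : a.perm⁻¹ (φ (a'.perm i)) < a.perm⁻¹ (φ (a'.perm j)) :=
      ha'.perm_inv_lt_iff.2 (by simp [Fin.lt_def, hij])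
    have hblock : a.part (a.perm⁻¹ (φ (a'.perm i))) = a.part (a.perm⁻¹ (φ (a'.perm j))) :=
      ha'.part_perm_inv_eq_iff.2 (by simpa using hp)
    exact hb'.perm_inv_lt_iff.1 (hab.perm_inv_lt hlt hblock)

/-- Let `φ : {1,…,k} → {1,…,l}` be an injection and `a ≼ b` in `𝓛(l)`.
Then `φ*(a) ≼ φ*(b)` in `𝓛(k)`: the pullback map `φ* : 𝓛(l) → 𝓛(k)` is order
preserving (so the ordered-partition posets form a preoperad of posets). -/
theorem stmt2 {k l : ℕ} (φ : Fin k → Fin l) (hφ : Function.Injective φ)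
    (a b : OrdPart l) (hab : a.le b)
    (a' : OrdPart k) (ha' : IsPullbackOrdPart φ a a')
    (b' : OrdPart k) (hb' : IsPullbackOrdPart φ b b') :
    a'.le b' :=
  stmt2_general φ a b hab a' ha' b' hb'
end

section
/- Let G be a weak bi-Δ-group. For every n ≥ 1 and every x ∈ 𝔥_n G, the element d_0 x lies in 𝔥_{n−1} G, the resulting map p_n : 𝔥_n G → 𝔥_{n−1} G, x ↦ d_0 x, is a surjective group homomorphism, and its kernel is exactly the Moore cycle group Z_n G = ⋂_{j=0}^n ker(d_j). -/
universe u

section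

variable (G : ℕ → Type u) [∀ n, Group (G n)]
variable (d : ∀ n : ℕ, ℕ → (G (n + 1) →* G n))
variable (δ : ∀ n : ℕ, ℕ → (G n → G (n + 1)))

/-- The axioms of a weak bi-Δ-group: a sequence of groups `G n` with faces
`d n j : G (n+1) →* G n` (group homomorphisms, for `j ≤ n+1`) and cofaces
`δ n i : G n → G (n+1)` (mere functions, for `i ≤ n+1`), satisfying the
simplicial-type identities. -/
structure IsWeakBiDelta : Prop where
  face_face : ∀ n i j : ℕ, i ≤ j → j ≤ n + 1 → ∀ x : G (n + 2),
    d n i (d (n + 1) (j + 1) x) = d n j (d (n + 1) i x)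
  coface_coface : ∀ n i j : ℕ, j ≤ i → i ≤ n + 1 → ∀ x : G n,
    δ (n + 1) j (δ n i x) = δ (n + 1) (i + 1) (δ n j x)
  face_coface_lt : ∀ n i j : ℕ, j ≤ i → i ≤ n + 1 → ∀ x : G (n + 1),
    d (n + 1) j (δ (n + 1) (i + 1) x) = δ n i (d n j x)
  face_coface_eq : ∀ n i : ℕ, i ≤ n + 1 → ∀ x : G n, d n i (δ n i x) = x
  face_coface_gt : ∀ n i j : ℕ, i ≤ j → j ≤ n + 1 → ∀ x : G (n + 1),
    d (n + 1) (j + 1) (δ (n + 1) i x) = δ n i (d n j x)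

/-- The `n`-th Cohen group `𝔥_n G = {x ∈ G_n : d_0 x = d_1 x = ⋯ = d_n x}`
(with `𝔥_0 G = G_0`). -/
def cohenSet : ∀ n : ℕ, Set (G n)
  | 0 => Set.univ
  | m + 1 => { x : G (m + 1) | ∀ j, j ≤ m + 1 → d m j x = d m 0 x }

end

/-!
The faces are homomorphisms, so `p_n = d₀` is one; the identity `d_j d₀ = d₀ d_{j+1}` shows that
`d₀` maps `𝔥_n G` into `𝔥_{n-1} G`; and on `𝔥_n G` all faces agree, so the kernel of `d₀` is
`Z_n G`. Surjectivity is a filling argument. Given `y` with all faces equal, start from `ξ = 1`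
and for `k = 0, …, n` replace `ξ` by `ξ (d^k c)⁻¹ d^k y`, where `c` is the common value of the
faces of `ξ` of index `≥ k`: by the face–coface identities the faces below `k` stay `y`, face `k`
becomes `y` and the faces above `k` still agree, although `d^k` is not a homomorphism. In degree
`0` the identity `d₁ d⁰ = d⁰ d₀` is unavailable; there the filler is `d⁰y (d¹a)⁻¹ d¹y` with
`a = d₁ d⁰ y`, whose faces are computed through `d¹ d⁰ y` and `d² d⁰ y` in `G 2`.
-/

def IsPartialFiller {G : ℕ → Type u} [∀ n, Group (G n)] (d : ∀ n : ℕ, ℕ → (G (n + 1) →* G n))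
    (p : ℕ) (Y : G (p + 1)) (k : ℕ) (ξ : G (p + 2)) : Prop :=
  (∀ j < k, j ≤ p + 2 → d (p + 1) j ξ = Y) ∧
    ∀ j, k ≤ j → j ≤ p + 2 → d (p + 1) j ξ = d (p + 1) (p + 2) ξ

section

variable {G : ℕ → Type u} [∀ n, Group (G n)] {d : ∀ n : ℕ, ℕ → (G (n + 1) →* G n)}

theorem mem_cohenSet_succ_of_faces_eq {m : ℕ} {x : G (m + 1)} {y : G m}
    (hx : ∀ j ≤ m + 1, d m j x = y) : x ∈ cohenSet G d (m + 1) :=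
  fun j hj => (hx j hj).trans (hx 0 (Nat.zero_le _)).symm

theorem face_zero_eq_one_iff_of_mem_cohenSet {m : ℕ} {x : G (m + 1)}
    (hx : x ∈ cohenSet G d (m + 1)) : d m 0 x = 1 ↔ ∀ j ≤ m + 1, d m j x = 1 :=
  ⟨fun h0 j hj => (hx j hj).trans h0, fun h1 => h1 0 (Nat.zero_le _)⟩

end

namespace IsWeakBiDelta

variable {G : ℕ → Type u} [∀ n, Group (G n)] {d : ∀ n : ℕ, ℕ → (G (n + 1) →* G n)}
  {δ : ∀ n : ℕ, ℕ → (G n → G (n + 1))}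

theorem face_zero_mem_cohenSet (h : IsWeakBiDelta G d δ) {m : ℕ} {x : G (m + 1)}
    (hx : x ∈ cohenSet G d (m + 1)) : d m 0 x ∈ cohenSet G d m := by
  cases m with
  | zero => trivial
  | succ k =>
    intro j hj
    rw [← h.face_face k 0 j (Nat.zero_le j) hj x, hx (j + 1) (by omega)]

theorem exists_faces_eq_level_zero (h : IsWeakBiDelta G d δ) (y : G 0) :
    ∃ x : G 1, ∀ j ≤ 1, d 0 j x = y := by
  set A := δ 0 0 y
  set a := d 0 1 A
  have hA : d 0 0 A = y := h.face_coface_eq 0 0 le_self_add y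
  have ha₀ : d 0 0 (δ 0 1 a) = a := by
    have hB₀ : d 1 0 (δ 1 1 A) = A := by rw [h.face_coface_lt 0 0 0 le_rfl le_self_add, hA]
    rw [← h.face_coface_gt 0 1 1 le_rfl le_rfl, h.face_face 0 0 1 (Nat.zero_le 1) le_rfl, hB₀]
  have ha₁ : d 0 1 (δ 0 1 a) = a := h.face_coface_eq 0 1 le_rfl a
  have hy₀ : d 0 0 (δ 0 1 y) = a := by
    have := h.face_face 0 0 0 le_rfl (Nat.zero_le 1) (δ 1 2 A)
    rwa [h.face_coface_lt 0 1 1 le_rfl le_rfl, h.face_coface_lt 0 1 0 (Nat.zero_le 1) le_rfl, hA,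
      ha₀, eq_comm] at this
  have hy₁ : d 0 1 (δ 0 1 y) = y := h.face_coface_eq 0 1 le_rfl y
  refine ⟨A * (δ 0 1 a)⁻¹ * δ 0 1 y, fun j hj => ?_⟩
  interval_cases j
  · rw [map_mul, map_mul, map_inv, hA, ha₀, hy₀, inv_mul_cancel_right]
  · rw [map_mul, map_mul, map_inv, ha₁, hy₁, mul_assoc]
    exact mul_inv_cancel_left a y

theorem exists_isPartialFiller_succ (h : IsWeakBiDelta G d δ) {p : ℕ} {Y : G (p + 1)}
    (hY : Y ∈ cohenSet G d (p + 1)) {k : ℕ} (hk : k ≤ p + 2) {ξ : G (p + 2)}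
    (hξ : IsPartialFiller d p Y k ξ) : ∃ ξ', IsPartialFiller d p Y (k + 1) ξ' := by
  obtain ⟨hlow, hhigh⟩ := hξ
  set c := d (p + 1) (p + 2) ξ
  have hc : ∀ j ≤ p + 1, d p j c = d p (p + 1) (d (p + 1) j ξ) :=
    fun j hj => h.face_face p j (p + 1) hj le_rfl ξ
  have hYj : ∀ j ≤ p + 1, d p j Y = d p 0 Y := hY
  set ξ' := ξ * (δ (p + 1) k c)⁻¹ * δ (p + 1) k Y
  have hhigh' : ∀ j, k ≤ j → j ≤ p + 1 →
      d (p + 1) (j + 1) ξ' = c * (δ p k (d p (p + 1) c))⁻¹ * δ p k (d p 0 Y) := by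
    intro j hkj hj
    rw [map_mul, map_mul, map_inv, h.face_coface_gt p k j hkj hj,
      h.face_coface_gt p k j hkj hj, hhigh (j + 1) (by omega) (by omega), hc j hj,
      hhigh j hkj (by omega), hYj j hj]
  refine ⟨ξ', fun j hjk hj => ?_, fun j hkj hj => ?_⟩
  · rcases Nat.lt_or_ge j k with hjk' | hjk'
    · obtain ⟨i, rfl⟩ : ∃ i, k = i + 1 := ⟨k - 1, by omega⟩
      have hcj : d p j c = d p j Y := by
        rw [hc j (by omega), hlow j hjk' hj, hYj (p + 1) le_rfl, hYj j (by omega)]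
      rw [map_mul, map_mul, map_inv, h.face_coface_lt p i j (by omega) (by omega),
        h.face_coface_lt p i j (by omega) (by omega), hlow j hjk' hj, hcj, inv_mul_cancel_right]
    · obtain rfl : j = k := by omega
      rw [map_mul, map_mul, map_inv, h.face_coface_eq (p + 1) j hj,
        h.face_coface_eq (p + 1) j hj, hhigh j le_rfl hj, mul_inv_cancel, one_mul]
  · obtain ⟨j, rfl⟩ : ∃ i, j = i + 1 := ⟨j - 1, by omega⟩
    rw [hhigh' j (by omega) (by omega), hhigh' (p + 1) (by omega) le_rfl]

theorem exists_isPartialFiller (h : IsWeakBiDelta G d δ) {p : ℕ} {Y : G (p + 1)}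
    (hY : Y ∈ cohenSet G d (p + 1)) (k : ℕ) (hk : k ≤ p + 3) :
    ∃ ξ, IsPartialFiller d p Y k ξ := by
  induction k with
  | zero => exact ⟨1, fun j hj => absurd hj (Nat.not_lt_zero j), fun j _ _ => by simp⟩
  | succ k ih =>
    obtain ⟨ξ, hξ⟩ := ih (by omega)
    exact h.exists_isPartialFiller_succ hY (by omega) hξ

theorem exists_faces_eq (h : IsWeakBiDelta G d δ) {m : ℕ} {y : G m}
    (hy : y ∈ cohenSet G d m) : ∃ x : G (m + 1), ∀ j ≤ m + 1, d m j x = y := by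
  cases m with
  | zero => exact h.exists_faces_eq_level_zero y
  | succ p =>
    obtain ⟨ξ, hξ, -⟩ := h.exists_isPartialFiller hy (p + 3) le_rfl
    exact ⟨ξ, fun j hj => hξ j (by omega) hj⟩

theorem exists_mem_cohenSet_face_zero_eq (h : IsWeakBiDelta G d δ) {m : ℕ} {y : G m}
    (hy : y ∈ cohenSet G d m) : ∃ x ∈ cohenSet G d (m + 1), d m 0 x = y := by
  obtain ⟨x, hx⟩ := h.exists_faces_eq hy
  exact ⟨x, mem_cohenSet_succ_of_faces_eq hx, hx 0 (Nat.zero_le _)⟩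

end IsWeakBiDelta

/-- Let `G` be a weak bi-Δ-group. For every `n ≥ 1` (here `n = m + 1`)
and `x ∈ 𝔥_n G`, the element `d_0 x` lies in `𝔥_{n-1} G`; the resulting map
`p_n : 𝔥_n G → 𝔥_{n-1} G`, `x ↦ d_0 x`, is a group homomorphism and is surjective;
and its kernel is exactly the Moore cycle group `Z_n G = ⋂_{j=0}^n ker d_j`. -/
theorem stmt3 (G : ℕ → Type u) [∀ n, Group (G n)]
    (d : ∀ n : ℕ, ℕ → (G (n + 1) →* G n)) (δ : ∀ n : ℕ, ℕ → (G n → G (n + 1)))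
    (h : IsWeakBiDelta G d δ) (m : ℕ) :
    (∀ x ∈ cohenSet G d (m + 1), d m 0 x ∈ cohenSet G d m) ∧
    (∀ x ∈ cohenSet G d (m + 1), ∀ y ∈ cohenSet G d (m + 1),
      d m 0 (x * y) = d m 0 x * d m 0 y) ∧
    (∀ y ∈ cohenSet G d m, ∃ x ∈ cohenSet G d (m + 1), d m 0 x = y) ∧
    ∀ x ∈ cohenSet G d (m + 1), (d m 0 x = 1 ↔ ∀ j, j ≤ m + 1 → d m j x = 1) :=
  ⟨fun _ hx => h.face_zero_mem_cohenSet hx, fun x _ y _ => map_mul _ x y,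
    fun _ hy => h.exists_mem_cohenSet_face_zero_eq hy,
    fun _ hx => face_zero_eq_one_iff_of_mem_cohenSet hx⟩
end

section
/- Second James–Hopf identity: let G be an abelian bi-Δ-group and k ≤ n ≤ m. Then H_{n,m} ∘ H_{k,n} = C(m−k, m−n) · H_{k,m} as group homomorphisms G_k → G_m, where C(m−k, m−n) is the binomial coefficient. -/
universe u

section

variable (G : ℕ → Type u) [∀ n, AddCommGroup (G n)]
variable (d : ∀ n : ℕ, ℕ → (G (n + 1) →+ G n))
variable (δ : ∀ n : ℕ, ℕ → (G n →+ G (n + 1)))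

/-- The axioms of an (abelian, additively written) bi-Δ-group: a sequence of groups `G n`
with faces `d n j : G (n+1) →+ G n` (for `j ≤ n+1`) and cofaces
`δ n i : G n →+ G (n+1)` (for `i ≤ n+1`), satisfying the simplicial-type identities. -/
structure IsBiDelta : Prop where
  face_face : ∀ n i j : ℕ, i ≤ j → j ≤ n + 1 → ∀ x : G (n + 2),
    d n i (d (n + 1) (j + 1) x) = d n j (d (n + 1) i x)
  coface_coface : ∀ n i j : ℕ, j ≤ i → i ≤ n + 1 → ∀ x : G n,
    δ (n + 1) j (δ n i x) = δ (n + 1) (i + 1) (δ n j x)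
  face_coface_lt : ∀ n i j : ℕ, j ≤ i → i ≤ n + 1 → ∀ x : G (n + 1),
    d (n + 1) j (δ (n + 1) (i + 1) x) = δ n i (d n j x)
  face_coface_eq : ∀ n i : ℕ, i ≤ n + 1 → ∀ x : G n, d n i (δ n i x) = x
  face_coface_gt : ∀ n i j : ℕ, i ≤ j → j ≤ n + 1 → ∀ x : G (n + 1),
    d (n + 1) (j + 1) (δ (n + 1) i x) = δ n i (d n j x)

/-- The `n`-th Cohen group `𝔥_n G = {x ∈ G_n : d_0 x = d_1 x = ⋯ = d_n x}`
(with `𝔥_0 G = G_0`), as a subgroup of `G n`. -/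
def cohenAll : ∀ n : ℕ, AddSubgroup (G n)
  | 0 => ⊤
  | m + 1 =>
    { carrier := { x : G (m + 1) | ∀ j, j ≤ m + 1 → d m j x = d m 0 x }
      add_mem' := fun {a b} ha hb j hj => by
        simp only [Set.mem_setOf_eq] at ha hb ⊢
        rw [map_add, map_add, ha j hj, hb j hj]
      zero_mem' := fun j hj => by simp
      neg_mem' := fun {a} ha j hj => by
        simp only [Set.mem_setOf_eq] at ha ⊢
        rw [map_neg, map_neg, ha j hj] }

/-- The `n`-th Moore cycle group `Z_n G = ⋂_{j=0}^n ker d_j` (with `Z_0 G = G_0`),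
as a subgroup of `G n`. -/
def mooreAll : ∀ n : ℕ, AddSubgroup (G n)
  | 0 => ⊤
  | m + 1 =>
    { carrier := { x : G (m + 1) | ∀ j, j ≤ m + 1 → d m j x = 0 }
      add_mem' := fun {a b} ha hb j hj => by
        simp only [Set.mem_setOf_eq] at ha hb ⊢
        rw [map_add, ha j hj, hb j hj, add_zero]
      zero_mem' := fun j hj => by simp
      neg_mem' := fun {a} ha j hj => by
        simp only [Set.mem_setOf_eq] at ha ⊢
        rw [map_neg, ha j hj, neg_zero] }

/-- Iterated cofaces `d^{c(r-1)} d^{c(r-2)} ⋯ d^{c(0)}(x)` along a tuple `c` of coface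
indices (`c 0` is applied first, at level `k`). -/
def iterCoface (k : ℕ) : ∀ r : ℕ, (Fin r → ℕ) → G k → G (k + r)
  | 0, _, x => x
  | r + 1, c, x => δ (k + r) (c (Fin.last r)) (iterCoface k r (fun i => c i.castSucc) x)

open Classical in
/-- The James–Hopf homomorphism `H_{k,n} : G_k → G_n` (`n = k + r`): the sum, over all
strictly increasing tuples `0 ≤ i_1 < i_2 < ⋯ < i_{n-k} ≤ n`, of
`d^{i_{n-k}} d^{i_{n-k-1}} ⋯ d^{i_1}(x)`. -/
noncomputable def jamesHopf (k r : ℕ) (x : G k) : G (k + r) :=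
  ∑ c ∈ Finset.univ.filter (fun c : Fin r → Fin (k + r + 1) => StrictMono c),
    iterCoface G δ k r (fun i => (c i : ℕ)) x

/-- `σ_{m+1} = H_{m,m+1} = Σ_{i=0}^{m+1} d^i : G m →+ G (m+1)` (as a function). -/
def sigmaMap (m : ℕ) (x : G m) : G (m + 1) :=
  ∑ i ∈ Finset.range (m + 2), δ m i x

/-- The composite `σ_{s+r} ∘ σ_{s+r-1} ∘ ⋯ ∘ σ_{s+1} : G s → G (s+r)`. -/
def sigmaIter (s : ℕ) : ∀ r : ℕ, G s → G (s + r)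
  | 0, x => x
  | r + 1, x => sigmaMap G δ (s + r) (sigmaIter s r x)

/-- The `r`-fold iterate of the zeroth face `d_0 : G (m+r) → G m`,
i.e. `p_{m+1} ∘ p_{m+2} ∘ ⋯ ∘ p_{m+r}` on Cohen groups. -/
def dIter (m : ℕ) : ∀ r : ℕ, G (m + r) → G m
  | 0, x => x
  | r + 1, x => dIter m r (d (m + r) 0 x)

end


/-
Encode the composite `d^{i_r} ∘ ⋯ ∘ d^{i_1}` (`i_1 < ⋯ < i_r`) by the decreasing word
`[i_r, …, i_1]`. The relation `d^t d^i = d^{i+1} d^t` (`t ≤ i`) pushes an outer coface `d^t` into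
such a composite, so the term of `H_{n,m} ∘ H_{k,n}` indexed by a pair of words is the term of
`H_{k,m}` indexed by their merge `L`, in which the outer word sits as a sublist of length `m - n`.
The pair is recovered from `L` and that sublist, and a count shows that every such pair
(word, sublist) arises, so each term of `H_{k,m}` occurs `C(m-k, m-n)` times.
-/

namespace JamesHopf

/-- Inserting the coface index `t` into a strictly decreasing word: the normal form of
`d^t ∘ d^{i_r} ∘ ⋯ ∘ d^{i_1}`, by `d^t d^i = d^{i+1} d^t` for `t ≤ i`. -/
def insertCoface (t : ℕ) : List ℕ → List ℕ
  | [] => [t]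
  | a :: l => if t ≤ a then (a + 1) :: insertCoface t l else t :: a :: l

def insertCofaces (m l : List ℕ) : List ℕ :=
  m.foldr insertCoface l

@[simp] theorem length_insertCoface (t : ℕ) (l : List ℕ) :
    (insertCoface t l).length = l.length + 1 := by
  induction l with
  | nil => rfl
  | cons a l ih => simp only [insertCoface]; split_ifs <;> simp [ih]

theorem insertCoface_injective (t : ℕ) : Function.Injective (insertCoface t) := by
  intro l l' h
  induction l generalizing l' with
  | nil => simpa using (congrArg List.length h).symm
  | cons a l ih =>
    cases l' with
    | nil => simpa using congrArg List.length h
    | cons a' l' =>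
      simp only [insertCoface] at h
      split_ifs at h
      · simp only [List.cons.injEq, Nat.add_right_cancel_iff] at h
        rw [h.1, ih h.2]
      · simp only [List.cons.injEq] at h; omega
      · simp only [List.cons.injEq] at h; omega
      · simp only [List.cons.injEq] at h
        rw [h.2.1, h.2.2]

theorem forall_mem_insertCoface_le {t n : ℕ} {l : List ℕ} (hl : ∀ a ∈ l, a < n) (ht : t ≤ n) :
    ∀ b ∈ insertCoface t l, b ≤ n := by
  induction l with
  | nil => simpa [insertCoface]
  | cons a l ih =>
    simp only [List.mem_cons, forall_eq_or_imp] at hl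
    simp only [insertCoface]
    split_ifs <;> simp only [List.mem_cons, forall_eq_or_imp]
    · exact ⟨hl.1, ih hl.2⟩
    · exact ⟨ht, hl.1.le, fun b hb => (hl.2 b hb).le⟩

theorem pairwise_insertCoface (t : ℕ) {l : List ℕ} (hl : l.Pairwise (· > ·)) :
    (insertCoface t l).Pairwise (· > ·) := by
  induction l with
  | nil => simp [insertCoface]
  | cons a l ih =>
    rw [List.pairwise_cons] at hl
    simp only [insertCoface]
    split_ifs with hta
    · exact List.pairwise_cons.2
        ⟨fun b hb => Nat.lt_succ_of_le (forall_mem_insertCoface_le hl.1 hta b hb), ih hl.2⟩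
    · refine List.pairwise_cons.2 ⟨?_, List.pairwise_cons.2 hl⟩
      simp only [List.mem_cons, forall_eq_or_imp]
      exact ⟨by omega, fun b hb => by have := hl.1 b hb; omega⟩

theorem insertCofaces_injective (m : List ℕ) : Function.Injective (insertCofaces m) := by
  induction m with
  | nil => exact Function.injective_id
  | cons t m ih => exact (insertCoface_injective t).comp ih

theorem cons_sublist_insertCoface {t : ℕ} {m l : List ℕ} (hml : m.Sublist l)
    (hm : ∀ b ∈ m, b < t) :
    (t :: m).Sublist (insertCoface t l) := by
  induction l generalizing m with
  | nil => simp_all [insertCoface]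
  | cons a l ih =>
    simp only [insertCoface]
    split_ifs with hta
    · rcases List.sublist_cons_iff.1 hml with hml | ⟨m', rfl, -⟩
      · exact (ih hml hm).cons _
      · exact absurd (hm a List.mem_cons_self) (by omega)
    · exact hml.cons_cons t

theorem sublist_insertCofaces {m : List ℕ} (l : List ℕ) (hm : m.Pairwise (· > ·)) :
    m.Sublist (insertCofaces m l) := by
  induction m with
  | nil => exact List.nil_sublist l
  | cons t m ih =>
    rw [List.pairwise_cons] at hm
    exact cons_sublist_insertCoface (ih hm.2) hm.1

/-- The word `[i_r, …, i_1]` of a term `d^{i_r} ∘ ⋯ ∘ d^{i_1}` of `H_{k,k+r}`. -/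
def IsCofaceWord (k r : ℕ) (l : List ℕ) : Prop :=
  l.length = r ∧ l.Pairwise (· > ·) ∧ ∀ a ∈ l, a ≤ k + r

theorem IsCofaceWord.tail {k r t : ℕ} {l : List ℕ} (h : IsCofaceWord k (r + 1) (t :: l)) :
    IsCofaceWord k r l := by
  obtain ⟨hlen, hl, hb⟩ := h
  rw [List.pairwise_cons] at hl
  refine ⟨by simpa using hlen, hl.2, fun a ha => ?_⟩
  have := hl.1 a ha
  have := hb t List.mem_cons_self
  omega

theorem IsCofaceWord.insertCoface {k r t : ℕ} {l : List ℕ} (h : IsCofaceWord k r l)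
    (ht : t ≤ k + r + 1) : IsCofaceWord k (r + 1) (insertCoface t l) :=
  ⟨by simp [h.1], pairwise_insertCoface t h.2.1,
    forall_mem_insertCoface_le (fun a ha => Nat.lt_succ_of_le (h.2.2 a ha)) ht⟩

theorem IsCofaceWord.insertCofaces {k r s : ℕ} {m l : List ℕ} (hm : IsCofaceWord (k + r) s m)
    (hl : IsCofaceWord k r l) : IsCofaceWord k (r + s) (insertCofaces m l) := by
  induction m generalizing s with
  | nil => obtain rfl : s = 0 := hm.1.symm; exact hl
  | cons t m ih =>
    obtain ⟨s, rfl⟩ : ∃ s', s = s' + 1 := ⟨m.length, hm.1.symm⟩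
    exact (ih hm.tail).insertCoface (by have := hm.2.2 t List.mem_cons_self; omega)

theorem card_toFinset_sublistsLen {α : Type*} [DecidableEq α] {L : List α} (hL : L.Nodup)
    (s : ℕ) : (L.sublistsLen s).toFinset.card = L.length.choose s := by
  rw [List.toFinset_card_of_nodup (List.nodup_sublistsLen s hL), List.length_sublistsLen]

def cofaceWords (k r : ℕ) : Finset (List ℕ) :=
  ((List.range (k + r + 1)).reverse.sublistsLen r).toFinset

theorem mem_cofaceWords {k r : ℕ} {l : List ℕ} : l ∈ cofaceWords k r ↔ IsCofaceWord k r l := by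
  have hrange : (List.range (k + r + 1)).reverse.Pairwise (· > ·) :=
    List.pairwise_reverse.2 List.pairwise_lt_range
  simp only [cofaceWords, List.mem_toFinset, List.mem_sublistsLen, IsCofaceWord]
  constructor
  · rintro ⟨hsub, hlen⟩
    refine ⟨hlen, hrange.sublist hsub, fun a ha => ?_⟩
    have := hsub.subset ha
    simp only [List.mem_reverse, List.mem_range] at this
    omega
  · rintro ⟨hlen, hl, hb⟩
    refine ⟨List.sublist_of_subperm_of_pairwise ?_ hl hrange, hlen⟩
    exact List.subperm_of_subset (hl.imp ne_of_gt) fun a ha => by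
      simp only [List.mem_reverse, List.mem_range]; have := hb a ha; omega

theorem card_cofaceWords (k r : ℕ) : (cofaceWords k r).card = (k + r + 1).choose r := by
  rw [cofaceWords, card_toFinset_sublistsLen (List.nodup_reverse.2 List.nodup_range),
    List.length_reverse, List.length_range]

theorem card_toFinset_sublistsLen_of_mem_cofaceWords {k n : ℕ} {L : List ℕ}
    (hL : L ∈ cofaceWords k n) (s : ℕ) : (L.sublistsLen s).toFinset.card = n.choose s := by
  obtain ⟨hlen, hL, -⟩ := mem_cofaceWords.1 hL
  rw [card_toFinset_sublistsLen (hL.imp ne_of_gt), hlen]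

theorem injOn_insertCofaces_sigma (k r s : ℕ) :
    Set.InjOn (fun p : List ℕ × List ℕ => (⟨insertCofaces p.1 p.2, p.1⟩ : (_ : List ℕ) × List ℕ))
      (cofaceWords (k + r) s ×ˢ cofaceWords k r : Finset _) := by
  rintro ⟨m, l⟩ - ⟨m', l'⟩ - h
  simp only [Sigma.mk.inj_iff, heq_eq_eq] at h
  obtain ⟨h, rfl⟩ := h
  rw [insertCofaces_injective m h]

/-- The map is injective and both sides have
`C(k+r+s+1, s) C(k+r+1, r) = C(k+r+s+1, r+s) C(r+s, s)` elements. -/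
theorem image_insertCofaces_sigma (k r s : ℕ) :
    (cofaceWords (k + r) s ×ˢ cofaceWords k r).image
        (fun p => (⟨insertCofaces p.1 p.2, p.1⟩ : (_ : List ℕ) × List ℕ))
      = (cofaceWords k (r + s)).sigma fun L => (L.sublistsLen s).toFinset := by
  refine Finset.eq_of_subset_of_card_le ?_ ?_
  · simp only [Finset.subset_iff, Finset.mem_image, Finset.mem_product, Finset.mem_sigma,
      List.mem_toFinset, List.mem_sublistsLen, mem_cofaceWords]
    rintro _ ⟨⟨m, l⟩, ⟨hm, hl⟩, rfl⟩
    exact ⟨hm.insertCofaces hl, sublist_insertCofaces l hm.2.1, hm.1⟩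
  · rw [Finset.card_sigma,
      Finset.sum_congr rfl fun L hL => card_toFinset_sublistsLen_of_mem_cofaceWords hL s,
      Finset.sum_const, smul_eq_mul,
      Finset.card_image_of_injOn (injOn_insertCofaces_sigma k r s), Finset.card_product,
      card_cofaceWords, card_cofaceWords, card_cofaceWords,
      show k + (r + s) + 1 = k + r + s + 1 by omega, Nat.choose_mul (Nat.le_add_left s r),
      show k + r + s + 1 - s = k + r + 1 by omega, Nat.add_sub_cancel]

theorem sum_sum_insertCofaces {M : Type*} [AddCommMonoid M] (k r s : ℕ) (F : List ℕ → M) :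
    ∑ m ∈ cofaceWords (k + r) s, ∑ l ∈ cofaceWords k r, F (insertCofaces m l)
      = (r + s).choose s • ∑ L ∈ cofaceWords k (r + s), F L := by
  calc ∑ m ∈ cofaceWords (k + r) s, ∑ l ∈ cofaceWords k r, F (insertCofaces m l)
      = ∑ p ∈ cofaceWords (k + r) s ×ˢ cofaceWords k r, F (insertCofaces p.1 p.2) :=
        (Finset.sum_product' _ _ _).symm
    _ = ∑ q ∈ (cofaceWords k (r + s)).sigma fun L => (L.sublistsLen s).toFinset, F q.1 := by
        rw [← image_insertCofaces_sigma, Finset.sum_image (injOn_insertCofaces_sigma k r s)]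
    _ = (r + s).choose s • ∑ L ∈ cofaceWords k (r + s), F L := by
        rw [Finset.sum_sigma, Finset.smul_sum]
        refine Finset.sum_congr rfl fun L hL => ?_
        dsimp only
        rw [Finset.sum_const, card_toFinset_sublistsLen_of_mem_cofaceWords hL]

section Cofaces

variable {G : ℕ → Type u} [∀ n, AddCommGroup (G n)] (δ : ∀ n : ℕ, ℕ → (G n →+ G (n + 1)))

/-- `cofaces δ k r [i_r, …, i_1] = d^{i_r} ∘ ⋯ ∘ d^{i_1} : G k →+ G (k + r)`, and `0` when the
word does not have length `r`. -/
def cofaces (k : ℕ) : (r : ℕ) → List ℕ → (G k →+ G (k + r))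
  | 0, [] => AddMonoidHom.id _
  | r + 1, a :: l => (δ (k + r) a).comp (cofaces k r l)
  | _, _ => 0

theorem iterCoface_eq_cofaces (k : ℕ) {r : ℕ} (c : Fin r → ℕ) (x : G k) :
    iterCoface G δ k r c x = cofaces δ k r (List.ofFn fun i => c i.rev) x := by
  induction r with
  | zero => rfl
  | succ r ih =>
    rw [List.ofFn_succ, iterCoface, ih]
    simp only [Fin.rev_succ]
    rfl

theorem jamesHopf_eq_sum_cofaces (k r : ℕ) (x : G k) :
    jamesHopf G δ k r x = ∑ l ∈ cofaceWords k r, cofaces δ k r l x := by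
  classical
  rw [jamesHopf]
  refine Finset.sum_nbij (fun c => List.ofFn fun i => ((c i.rev : Fin (k + r + 1)) : ℕ))
    ?_ ?_ ?_ fun c _ => iterCoface_eq_cofaces δ k _ x
  · intro c hc
    replace hc : StrictMono c := (Finset.mem_filter.1 hc).2
    refine mem_cofaceWords.2 ⟨List.length_ofFn, List.pairwise_ofFn.2 fun i j hij => ?_, ?_⟩
    · exact hc (Fin.rev_lt_rev.2 hij)
    · simp only [List.mem_ofFn]
      rintro _ ⟨i, rfl⟩
      exact Nat.lt_succ_iff.1 (c i.rev).isLt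
  · intro c _ c' _ h
    funext i
    exact Fin.ext (by simpa using congrFun (List.ofFn_injective h) i.rev)
  · intro l hl
    obtain ⟨hlen, hsorted, hb⟩ := mem_cofaceWords.1 (Finset.mem_coe.1 hl)
    subst hlen
    refine ⟨fun i => ⟨l.get i.rev, Nat.lt_succ_of_le (hb _ (List.get_mem _ _))⟩, ?_, ?_⟩
    · refine Finset.mem_coe.2 (Finset.mem_filter.2 ⟨Finset.mem_univ _, fun i j hij => ?_⟩)
      exact List.pairwise_iff_get.1 hsorted _ _ (Fin.rev_lt_rev.2 hij)
    · simp

theorem coface_cast {a b : ℕ} (hab : a = b) (t : ℕ) (y : G a) :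
    δ b t (cast (congrArg G hab) y) = cast (congrArg G (congrArg (· + 1) hab)) (δ a t y) := by
  subst hab
  rfl

theorem cast_sum {a b : ℕ} (hab : a = b) {ι : Type*} (S : Finset ι) (f : ι → G a) :
    cast (congrArg G hab) (∑ i ∈ S, f i) = ∑ i ∈ S, cast (congrArg G hab) (f i) := by
  subst hab
  rfl

variable {d : ∀ n : ℕ, ℕ → (G (n + 1) →+ G n)}

theorem coface_cofaces (h : IsBiDelta G d δ) {k r : ℕ} (t : ℕ) {l : List ℕ}
    (hl : IsCofaceWord k r l) (x : G k) :
    δ (k + r) t (cofaces δ k r l x) = cofaces δ k (r + 1) (insertCoface t l) x := by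
  induction l generalizing r with
  | nil => obtain rfl : r = 0 := hl.1.symm; rfl
  | cons a l ih =>
    obtain ⟨r, rfl⟩ : ∃ r', r = r' + 1 := ⟨l.length, hl.1.symm⟩
    simp only [insertCoface]
    split_ifs with hta
    · have ha : a ≤ k + r + 1 := hl.2.2 a List.mem_cons_self
      change δ (k + r + 1) t (δ (k + r) a _) = δ (k + r + 1) (a + 1) (cofaces δ k (r + 1) _ x)
      rw [h.coface_coface _ _ _ hta ha, ih hl.tail]
    · rfl

theorem cofaces_cofaces (h : IsBiDelta G d δ) {k r s : ℕ} {m l : List ℕ}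
    (hm : IsCofaceWord (k + r) s m) (hl : IsCofaceWord k r l) (x : G k) :
    cofaces δ (k + r) s m (cofaces δ k r l x)
      = cast (congrArg G (Nat.add_assoc k r s).symm)
          (cofaces δ k (r + s) (insertCofaces m l) x) := by
  induction m generalizing s with
  | nil => obtain rfl : s = 0 := hm.1.symm; rfl
  | cons t m ih =>
    obtain ⟨s, rfl⟩ : ∃ s', s = s' + 1 := ⟨m.length, hm.1.symm⟩
    change δ (k + r + s) t (cofaces δ (k + r) s m _) = _
    rw [ih hm.tail, coface_cast δ (Nat.add_assoc k r s).symm,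
      coface_cofaces δ h t (hm.tail.insertCofaces hl)]
    rfl

end Cofaces

end JamesHopf

open JamesHopf

/-- second James–Hopf identity. For an abelian bi-Δ-group `G` and
`k ≤ n ≤ m` (here `n = k + r`, `m = n + s = k + r + s`),
`H_{n,m} ∘ H_{k,n} = C(m-k, m-n) · H_{k,m}` as homomorphisms `G_k → G_m`;
note `m - k = r + s` and `m - n = s`. -/
theorem stmt8 (G : ℕ → Type u) [∀ n, AddCommGroup (G n)]
    (d : ∀ n : ℕ, ℕ → (G (n + 1) →+ G n)) (δ : ∀ n : ℕ, ℕ → (G n →+ G (n + 1)))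
    (h : IsBiDelta G d δ) (k r s : ℕ) (x : G k) :
    jamesHopf G δ (k + r) s (jamesHopf G δ k r x)
      = (r + s).choose s •
          cast (congrArg G (Nat.add_assoc k r s).symm) (jamesHopf G δ k (r + s) x) := by
  calc jamesHopf G δ (k + r) s (jamesHopf G δ k r x)
      = ∑ m ∈ cofaceWords (k + r) s, ∑ l ∈ cofaceWords k r,
          cofaces δ (k + r) s m (cofaces δ k r l x) := by
        simp only [jamesHopf_eq_sum_cofaces, map_sum]
    _ = ∑ m ∈ cofaceWords (k + r) s, ∑ l ∈ cofaceWords k r,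
          cast (congrArg G (Nat.add_assoc k r s).symm)
            (cofaces δ k (r + s) (insertCofaces m l) x) :=
        Finset.sum_congr rfl fun m hm => Finset.sum_congr rfl fun l hl =>
          cofaces_cofaces δ h (mem_cofaceWords.1 hm) (mem_cofaceWords.1 hl) x
    _ = (r + s).choose s •
          cast (congrArg G (Nat.add_assoc k r s).symm) (jamesHopf G δ k (r + s) x) := by
        rw [sum_sum_insertCofaces k r s fun L =>
          cast (congrArg G (Nat.add_assoc k r s).symm) (cofaces δ k (r + s) L x),
          jamesHopf_eq_sum_cofaces, cast_sum (Nat.add_assoc k r s).symm]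
end

section
/- Let G be an abelian bi-Δ-group and 0 ≤ s < n. Then σ_n ∘ σ_{n−1} ∘ ⋯ ∘ σ_{s+1} = (n−s)! · H_{s,n} as group homomorphisms G_s → G_n. In particular, for n ≤ m, H_{n,m} ∘ σ_n = (m−n+1) · H_{n−1,m} as homomorphisms G_{n−1} → G_m. -/
universe u

/-!
Every term of `H_{a+1,m} (σ_{a+1} x)` is a word `d^{c_t} ⋯ d^{c_1} d^i x` with `c` increasing.
The relations `d^j d^i = d^{i+1} d^j` (`j ≤ i`) move `d^i` past the `p` letters with
`c_k ≤ i + k`, turning the word into the increasing word `g` obtained from `c` by inserting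
`i + p` at position `p`. Conversely `c` is `g` with its `p`-th letter removed and `i = g_p - p`,
so `(c, i) ↦ (g, p)` is a bijection onto pairs of an increasing word of length `t + 1` and a
position in it: every term of `H_{a,m}` is hit `m - a` times. The first identity follows by
induction, peeling off `σ_{s+1}` and applying the second.
-/

open Finset

lemma Fin.insertNth_castSucc_snoc {α : Type*} {n : ℕ} (p : Fin (n + 1)) (x y : α)
    (c : Fin n → α) :
    Fin.insertNth (α := fun _ ↦ α) p.castSucc x (Fin.snoc c y) =
      Fin.snoc (α := fun _ ↦ α) (Fin.insertNth (α := fun _ ↦ α) p x c) y := by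
  funext j
  cases j using Fin.lastCases with
  | last =>
    have : p.castSucc.succAbove (Fin.last n) = Fin.last (n + 1) := by simp
    rw [Fin.snoc_last, ← this, Fin.insertNth_apply_succAbove, Fin.snoc_last]
  | cast j =>
    cases j using Fin.succAboveCases p with
    | x => simp
    | p k =>
      rw [Fin.snoc_castSucc, ← Fin.castSucc_succAbove_castSucc, Fin.insertNth_apply_succAbove,
        Fin.insertNth_apply_succAbove, Fin.snoc_castSucc]

lemma Fin.add_sub_le_of_strictMono {n : ℕ} {c : Fin n → ℕ} (hc : StrictMono c) {j k : Fin n}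
    (hjk : j ≤ k) : c j + (k - j : ℕ) ≤ c k := by
  obtain ⟨k, hk⟩ := k
  change (j : ℕ) ≤ k at hjk
  induction k, hjk using Nat.le_induction with
  | base => simp
  | succ m _ ih =>
    dsimp only at ih ⊢
    have := hc (show (⟨m, by omega⟩ : Fin n) < ⟨m + 1, hk⟩ from Nat.lt_succ_self m)
    have := ih (by omega)
    omega

lemma Fin.val_lt_card_iff_mem_of_isLowerSet {n : ℕ} {s : Finset (Fin n)}
    (hs : IsLowerSet (s : Set (Fin n))) (k : Fin n) : (k : ℕ) < #s ↔ k ∈ s := by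
  constructor
  · intro hk
    by_contra hks
    have : s ⊆ Iio k := fun j hj ↦ mem_Iio.2 (lt_of_not_ge fun hkj ↦ hks (hs hkj hj))
    have := card_le_card this
    rw [Fin.card_Iio] at this
    omega
  · intro hks
    have : Iic k ⊆ s := fun j hj ↦ hs (mem_Iic.1 hj) hks
    have := card_le_card this
    rw [Fin.card_Iic] at this
    omega

lemma Fin.val_le_of_strictMono {n : ℕ} {c : Fin n → ℕ} (hc : StrictMono c) (k : Fin n) :
    (k : ℕ) ≤ c k := by
  have := Fin.add_sub_le_of_strictMono hc (j := ⟨0, k.pos⟩) (Nat.zero_le k)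
  simp only [Nat.sub_zero] at this
  omega

def strictMonoTuples (r N : ℕ) : Finset (Fin r → ℕ) :=
  (Fintype.piFinset fun _ ↦ range (N + 1)).filter StrictMono

lemma mem_strictMonoTuples {r N : ℕ} {c : Fin r → ℕ} :
    c ∈ strictMonoTuples r N ↔ StrictMono c ∧ ∀ k, c k ≤ N := by
  simp [strictMonoTuples, and_comm]

/-- Where `d^i` comes to rest when it is commuted up through the word `d^c`. -/
def insertPos {t : ℕ} (c : Fin t → ℕ) (i : ℕ) : Fin (t + 1) :=
  ⟨#{k | c k ≤ i + k}, Nat.lt_succ_of_le ((card_filter_le _ _).trans_eq (card_fin t))⟩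

def normalForm {t : ℕ} (c : Fin t → ℕ) (i : ℕ) : Fin (t + 1) → ℕ :=
  (insertPos c i).insertNth (i + insertPos c i) c

lemma val_lt_insertPos_iff {t i : ℕ} {c : Fin t → ℕ} (hc : StrictMono c) (k : Fin t) :
    (k : ℕ) < insertPos c i ↔ c k ≤ i + k := by
  have hlower : IsLowerSet (↑(univ.filter fun k : Fin t ↦ c k ≤ i + k) : Set (Fin t)) := by
    intro k j hjk hk
    simp only [coe_filter, mem_univ, true_and, Set.mem_ofPred_eq] at hk ⊢
    have := Fin.add_sub_le_of_strictMono hc hjk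
    have : (j : ℕ) ≤ k := hjk
    omega
  simp [insertPos, Fin.val_lt_card_iff_mem_of_isLowerSet hlower]

lemma insertPos_eq_of_forall {t i : ℕ} {c : Fin t → ℕ} {p : Fin (t + 1)}
    (h : ∀ k : Fin t, c k ≤ i + k ↔ (k : ℕ) < p) : insertPos c i = p := by
  ext
  simp only [insertPos, h, Fin.card_filter_val_lt]
  omega

lemma normalForm_mem_strictMonoTuples {a t i : ℕ} {c : Fin t → ℕ}
    (hc : c ∈ strictMonoTuples t (a + 1 + t)) (hi : i < a + 2) :
    normalForm c i ∈ strictMonoTuples (t + 1) (a + (t + 1)) := by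
  rw [mem_strictMonoTuples] at hc ⊢
  obtain ⟨hmono, hbound⟩ := hc
  have hp := (insertPos c i).is_le
  refine ⟨(Fin.strictMono_insertNth_iff _ _ _).2 ⟨hmono, fun k hk ↦ ?_, fun k hk ↦ ?_⟩,
    fun j ↦ ?_⟩
  · have := (val_lt_insertPos_iff hmono k).1 hk
    have : (k : ℕ) < insertPos c i := hk
    omega
  · have := (val_lt_insertPos_iff (i := i) hmono k).not.1 (not_lt.2 hk)
    have : (insertPos c i : ℕ) ≤ k := hk
    omega
  · cases j using Fin.succAboveCases (insertPos c i) with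
    | x => simp only [normalForm, Fin.insertNth_apply_same]; omega
    | p k => simp only [normalForm, Fin.insertNth_apply_succAbove]; have := hbound k; omega

lemma removeNth_mem_strictMonoTuples {a t : ℕ} {g : Fin (t + 1) → ℕ}
    (hg : g ∈ strictMonoTuples (t + 1) (a + (t + 1))) (p : Fin (t + 1)) :
    p.removeNth g ∈ strictMonoTuples t (a + 1 + t) := by
  rw [mem_strictMonoTuples] at hg ⊢
  exact ⟨hg.1.comp (Fin.strictMono_succAbove p), fun k ↦ by
    have := hg.2 (p.succAbove k); simp only [Fin.removeNth]; omega⟩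

lemma apply_sub_lt_of_mem_strictMonoTuples {a t : ℕ} {g : Fin (t + 1) → ℕ}
    (hg : g ∈ strictMonoTuples (t + 1) (a + (t + 1))) (p : Fin (t + 1)) : g p - p < a + 2 := by
  rw [mem_strictMonoTuples] at hg
  have := Fin.add_sub_le_of_strictMono hg.1 (Fin.le_last p)
  have := hg.2 (Fin.last t)
  simp only [Fin.val_last] at *
  omega

lemma insertPos_removeNth {t : ℕ} {g : Fin (t + 1) → ℕ} (hg : StrictMono g)
    (p : Fin (t + 1)) : insertPos (p.removeNth g) (g p - p) = p := by
  have hp := Fin.val_le_of_strictMono hg p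
  refine insertPos_eq_of_forall fun k ↦ ?_
  simp only [Fin.removeNth]
  rcases lt_or_ge k.castSucc p with hk | hk
  · rw [Fin.succAbove_of_castSucc_lt _ _ hk]
    have := Fin.add_sub_le_of_strictMono hg hk.le
    have : (k : ℕ) < p := hk
    simp only [Fin.val_castSucc] at *
    omega
  · rw [Fin.succAbove_of_le_castSucc _ _ hk]
    have := Fin.add_sub_le_of_strictMono hg (hk.trans (Fin.castSucc_le_succ k))
    have : (p : ℕ) ≤ k := hk
    simp only [Fin.val_succ] at *
    omega

lemma normalForm_removeNth {t : ℕ} {g : Fin (t + 1) → ℕ} (hg : StrictMono g)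
    (p : Fin (t + 1)) : normalForm (p.removeNth g) (g p - p) = g := by
  rw [normalForm, insertPos_removeNth hg, Nat.sub_add_cancel (Fin.val_le_of_strictMono hg p),
    Fin.insertNth_self_removeNth]

theorem sum_normalForm {M : Type*} [AddCommMonoid M] (a t : ℕ) (F : (Fin (t + 1) → ℕ) → M) :
    ∑ c ∈ strictMonoTuples t (a + 1 + t), ∑ i ∈ range (a + 2), F (normalForm c i) =
      (t + 1) • ∑ g ∈ strictMonoTuples (t + 1) (a + (t + 1)), F g := by
  calc _ = ∑ z ∈ strictMonoTuples t (a + 1 + t) ×ˢ range (a + 2), F (normalForm z.1 z.2) :=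
        (sum_product' _ _ _).symm
    _ = ∑ w ∈ strictMonoTuples (t + 1) (a + (t + 1)) ×ˢ (univ : Finset (Fin (t + 1))),
          F w.1 := ?_
    _ = _ := by rw [sum_product, smul_sum]; simp
  refine sum_nbij' (fun z ↦ (normalForm z.1 z.2, insertPos z.1 z.2))
    (fun w ↦ (w.2.removeNth w.1, w.1 w.2 - w.2)) ?_ ?_ ?_ ?_ (fun _ _ ↦ rfl)
  · rintro ⟨c, i⟩ hz
    rw [mem_product] at hz ⊢
    exact ⟨normalForm_mem_strictMonoTuples hz.1 (mem_range.1 hz.2), mem_univ _⟩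
  · rintro ⟨g, p⟩ hw
    rw [mem_product] at hw ⊢
    exact ⟨removeNth_mem_strictMonoTuples hw.1 p,
      mem_range.2 (apply_sub_lt_of_mem_strictMonoTuples hw.1 p)⟩
  · rintro ⟨c, i⟩ -
    simp [normalForm]
  · rintro ⟨g, p⟩ hw
    have hg := (mem_strictMonoTuples.1 (mem_product.1 hw).1).1
    simp [normalForm_removeNth hg, insertPos_removeNth hg]

section BiDelta

variable {G : ℕ → Type u} [∀ n, AddCommGroup (G n)]
  {d : ∀ n : ℕ, ℕ → (G (n + 1) →+ G n)} {δ : ∀ n : ℕ, ℕ → (G n →+ G (n + 1))}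

lemma iterCoface_snoc (k r : ℕ) (c : Fin r → ℕ) (y : ℕ) (x : G k) :
    iterCoface G δ k (r + 1) (Fin.snoc c y) x = δ (k + r) y (iterCoface G δ k r c x) := by
  simp [iterCoface]

lemma iterCoface_sum {ι : Type*} (k r : ℕ) (c : Fin r → ℕ) (s : Finset ι) (f : ι → G k) :
    iterCoface G δ k r c (∑ j ∈ s, f j) = ∑ j ∈ s, iterCoface G δ k r c (f j) := by
  induction r with
  | zero => rfl
  | succ r ih => simp only [iterCoface, ih, map_sum]

lemma jamesHopf_eq_sum_strictMonoTuples (k r : ℕ) (x : G k) :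
    jamesHopf G δ k r x = ∑ c ∈ strictMonoTuples r (k + r), iterCoface G δ k r c x := by
  classical
  refine sum_nbij' (fun (c : Fin r → Fin (k + r + 1)) j ↦ (c j : ℕ))
    (fun c j ↦ Fin.ofNat (k + r + 1) (c j)) ?_ ?_ ?_ ?_ (fun _ _ ↦ rfl)
  · intro c hc
    exact mem_strictMonoTuples.2
      ⟨Fin.val_strictMono.comp (mem_filter.1 hc).2, fun j ↦ Nat.le_of_lt_succ (c j).isLt⟩
  · intro c hc
    obtain ⟨hmono, hbound⟩ := mem_strictMonoTuples.1 hc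
    refine mem_filter.2 ⟨mem_univ _, fun j j' hjj' ↦ ?_⟩
    rw [Fin.lt_def, Fin.val_ofNat, Fin.val_ofNat, Nat.mod_eq_of_lt (Nat.lt_succ_of_le (hbound j)),
      Nat.mod_eq_of_lt (Nat.lt_succ_of_le (hbound j'))]
    exact hmono hjj'
  · intro c _
    simp only [Fin.ofNat_val_eq_self]
  · intro c hc
    funext j
    rw [Fin.val_ofNat, Nat.mod_eq_of_lt (Nat.lt_succ_of_le ((mem_strictMonoTuples.1 hc).2 j))]

lemma jamesHopf_one (s : ℕ) (x : G s) : jamesHopf G δ s 1 x = sigmaMap G δ s x := by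
  rw [jamesHopf_eq_sum_strictMonoTuples, sigmaMap]
  refine sum_nbij' (fun c ↦ c 0) (fun i _ ↦ i) ?_ ?_ ?_ ?_ (fun _ _ ↦ rfl)
  · intro c hc
    exact mem_range.2 (Nat.lt_succ_of_le ((mem_strictMonoTuples.1 hc).2 0))
  · intro i hi
    exact mem_strictMonoTuples.2
      ⟨Subsingleton.strictMono _, fun _ ↦ Nat.le_of_lt_succ (mem_range.1 hi)⟩
  · intro c _
    funext j
    rw [Fin.fin_one_eq_zero j]
  · intro i _
    rfl

theorem iterCoface_cons_eq_insertNth (h : IsBiDelta G d δ) {a i : ℕ} (hi : i ≤ a + 1)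
    (x : G a) {t : ℕ} (c : Fin t → ℕ) (p : Fin (t + 1))
    (hc : ∀ k : Fin t, k.castSucc < p → c k ≤ i + k) :
    iterCoface G δ a (t + 1) (Fin.cons i c) x =
      iterCoface G δ a (t + 1) (p.insertNth (i + p) c) x := by
  induction t with
  | zero => rw [Fin.fin_one_eq_zero p, Fin.insertNth_zero']; rfl
  | succ t ih =>
    obtain ⟨c, y, rfl⟩ : ∃ c' y, c = Fin.snoc c' y :=
      ⟨Fin.init c, c (Fin.last t), (Fin.snoc_init_self c).symm⟩
    rw [Fin.cons_snoc_eq_snoc_cons, iterCoface_snoc]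
    cases p using Fin.lastCases with
    | last =>
      have hy : y ≤ i + t := by
        simpa using hc (Fin.last t) (Fin.castSucc_lt_last _)
      rw [ih c (Fin.last t) fun k hk ↦ by simpa using hc k.castSucc (Fin.castSucc_lt_last _),
        Fin.insertNth_last', Fin.insertNth_last', iterCoface_snoc, iterCoface_snoc, iterCoface_snoc,
        Fin.val_last, Fin.val_last]
      exact h.coface_coface (a + t) (i + t) y hy (by omega) _
    | cast p =>
      rw [Fin.insertNth_castSucc_snoc, iterCoface_snoc, Fin.val_castSucc,
        ih c p fun k hk ↦ by simpa using hc k.castSucc (Fin.castSucc_lt_castSucc_iff.2 hk)]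

lemma coface_cast {m n : ℕ} (hmn : m = n) (j : ℕ) (x : G m) :
    δ n j (AddEquiv.cast hmn x) = AddEquiv.cast (congrArg (· + 1) hmn) (δ m j x) := by
  subst hmn; rfl

lemma sigmaMap_cast {m n : ℕ} (hmn : m = n) (x : G m) :
    sigmaMap G δ n (AddEquiv.cast hmn x) =
      AddEquiv.cast (congrArg (· + 1) hmn) (sigmaMap G δ m x) := by
  subst hmn; rfl

lemma iterCoface_coface (a t i : ℕ) (c : Fin t → ℕ) (x : G a) :
    iterCoface G δ (a + 1) t c (δ a i x) =
      AddEquiv.cast (by ring : a + (t + 1) = a + 1 + t)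
        (iterCoface G δ a (t + 1) (Fin.cons i c) x) := by
  induction t with
  | zero => rfl
  | succ t ih =>
    obtain ⟨c, y, rfl⟩ : ∃ c' y, c = Fin.snoc c' y :=
      ⟨Fin.init c, c (Fin.last t), (Fin.snoc_init_self c).symm⟩
    rw [iterCoface_snoc, ih, coface_cast, Fin.cons_snoc_eq_snoc_cons, iterCoface_snoc]

lemma sigmaIter_succ (s r : ℕ) (x : G s) :
    sigmaIter G δ s (r + 1) x =
      AddEquiv.cast (by ring : s + 1 + r = s + (r + 1))
        (sigmaIter G δ (s + 1) r (sigmaMap G δ s x)) := by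
  induction r with
  | zero => rfl
  | succ r ih => rw [sigmaIter, ih, sigmaMap_cast]; rfl

theorem jamesHopf_sigmaMap (h : IsBiDelta G d δ) (a t : ℕ) (x : G a) :
    jamesHopf G δ (a + 1) t (sigmaMap G δ a x) =
      (t + 1) • AddEquiv.cast (by ring : a + (t + 1) = a + 1 + t)
        (jamesHopf G δ a (t + 1) x) := by
  have hnormal : ∀ c ∈ strictMonoTuples t (a + 1 + t), ∀ i ∈ range (a + 2),
      iterCoface G δ (a + 1) t c (δ a i x) =
        AddEquiv.cast (by ring) (iterCoface G δ a (t + 1) (normalForm c i) x) := by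
    intro c hc i hi
    rw [iterCoface_coface, normalForm, iterCoface_cons_eq_insertNth h
      (Nat.le_of_lt_succ (mem_range.1 hi)) x c (insertPos c i)
      fun k hk ↦ (val_lt_insertPos_iff (mem_strictMonoTuples.1 hc).1 k).1 hk]
  calc jamesHopf G δ (a + 1) t (sigmaMap G δ a x)
      = ∑ c ∈ strictMonoTuples t (a + 1 + t), ∑ i ∈ range (a + 2),
          iterCoface G δ (a + 1) t c (δ a i x) := by
        simp only [jamesHopf_eq_sum_strictMonoTuples, sigmaMap, iterCoface_sum]
    _ = AddEquiv.cast _ ((t + 1) • ∑ g ∈ strictMonoTuples (t + 1) (a + (t + 1)),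
          iterCoface G δ a (t + 1) g x) := by
        rw [sum_congr rfl fun c hc ↦ sum_congr rfl (hnormal c hc), ← sum_normalForm, map_sum]
        simp_rw [map_sum]
    _ = _ := by rw [map_nsmul, jamesHopf_eq_sum_strictMonoTuples]

theorem sigmaIter_eq_factorial_smul_jamesHopf (h : IsBiDelta G d δ) (s r : ℕ) (x : G s) :
    sigmaIter G δ s (r + 1) x = (r + 1).factorial • jamesHopf G δ s (r + 1) x := by
  induction r generalizing s with
  | zero => rw [jamesHopf_one]; simp [sigmaIter]
  | succ r ih =>
    rw [sigmaIter_succ, ih, jamesHopf_sigmaMap h, smul_smul, map_nsmul]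
    simp [AddEquiv.cast_apply, Nat.factorial_succ (r + 1), mul_comm]

end BiDelta

/-- For an abelian bi-Δ-group `G` and `0 ≤ s < n` (here `n = s + r + 1`),
`σ_n ∘ σ_{n-1} ∘ ⋯ ∘ σ_{s+1} = (n-s)! · H_{s,n}` as homomorphisms `G_s → G_n`.
In particular, for `n ≤ m` (here `n = a + 1`, `m = n + t`),
`H_{n,m} ∘ σ_n = (m - n + 1) · H_{n-1,m}` as homomorphisms `G_{n-1} → G_m`. -/
theorem stmt10 (G : ℕ → Type u) [∀ n, AddCommGroup (G n)]
    (d : ∀ n : ℕ, ℕ → (G (n + 1) →+ G n)) (δ : ∀ n : ℕ, ℕ → (G n →+ G (n + 1)))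
    (h : IsBiDelta G d δ) :
    (∀ (s r : ℕ) (x : G s),
      sigmaIter G δ s (r + 1) x = Nat.factorial (r + 1) • jamesHopf G δ s (r + 1) x) ∧
    ∀ (a t : ℕ) (x : G a),
      jamesHopf G δ (a + 1) t (sigmaMap G δ a x)
        = (t + 1) •
            cast (congrArg G (by omega : a + (t + 1) = a + 1 + t))
              (jamesHopf G δ a (t + 1) x) := by
  exact ⟨sigmaIter_eq_factorial_smul_jamesHopf h, jamesHopf_sigmaMap h⟩
end
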